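/- arXiv:2503.08406 — 9 statements merged into one kernel-verified Lean document; each statement's English description precedes it below -/
import Mathlib

section
/- Let H be a k-uniform hypergraph on vertex set [n] with matching number exactly s. If T_1,...,T_s and V_1,...,V_s are two matchings in H (each consisting of s pairwise disjoint edges), then there exists a permutation σ of {1,...,s} such that T_i ∩ V_{σ(i)} ≠ ∅ for all 1 ≤ i ≤ s. -/
/-- The matching number of a hypergraph: the largest size of a set of
pairwise disjoint edges. -/
noncomputable def matchingNumber (H : Finset (Finset ℕ)) : ℕ :=
  sSup {m | ∃ M : Finset (Finset ℕ), M ⊆ H ∧ M.card = m ∧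
    (M : Set (Finset ℕ)).PairwiseDisjoint id}

/-- A hypergraph is `t`-resilient if deleting any set of at most `t`
vertices does not decrease its matching number. -/
def Resilient (t : ℕ) (H : Finset (Finset ℕ)) : Prop :=
  ∀ T : Finset ℕ, T.card ≤ t →
    matchingNumber (H.filter fun F => Disjoint F T) = matchingNumber H

/-- `S 0, …, S (r-1)` form a pseudo sunflower with center `C`:
the `S i` are distinct, `C` is a proper subset of one of them, and the
sets `S i \ C` are pairwise disjoint. -/
def IsPseudoSunflower {r : ℕ} (S : Fin r → Finset ℕ) (C : Finset ℕ) : Prop :=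
  Function.Injective S ∧ (∃ i, C ⊂ S i) ∧
    ∀ i j, i ≠ j → Disjoint (S i \ C) (S j \ C)

/-- The covering (transversal) number of a hypergraph. -/
noncomputable def coverNumber (H : Finset (Finset ℕ)) : ℕ :=
  sInf {m | ∃ Y : Finset ℕ, Y.card = m ∧ ∀ F ∈ H, (F ∩ Y).Nonempty}

/-- If `H` is a `k`-graph with matching number exactly `s`, and
`T`, `V` are two matchings of size `s` in `H`, then there is a permutation `σ`
with `T i ∩ V (σ i) ≠ ∅` for all `i`. -/
theorem stmt0 (n k s : ℕ) (hk : 1 ≤ k) (H : Finset (Finset ℕ))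
    (hH : H ⊆ (Finset.range n).powersetCard k)
    (hν : matchingNumber H = s)
    (T V : Fin s → Finset ℕ)
    (hT : ∀ i, T i ∈ H) (hV : ∀ i, V i ∈ H)
    (hTd : ∀ i j, i ≠ j → Disjoint (T i) (T j))
    (hVd : ∀ i j, i ≠ j → Disjoint (V i) (V j)) :
    ∃ σ : Equiv.Perm (Fin s), ∀ i, (T i ∩ V (σ i)).Nonempty := by

  classical
  -- edges are nonempty
  have hne : ∀ F ∈ H, F.Nonempty := by
    intro F hF
    have := Finset.mem_powersetCard.mp (hH hF)
    rw [← Finset.card_pos]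
    omega
  -- matching bound
  have hbound : ∀ M : Finset (Finset ℕ), M ⊆ H →
      (M : Set (Finset ℕ)).PairwiseDisjoint id → M.card ≤ s := by
    intro M hM hMd
    rw [← hν]
    exact le_csSup ⟨H.card, fun m ⟨M', hM', hc, _⟩ => hc ▸ Finset.card_le_card hM'⟩
      ⟨M, hM, rfl, hMd⟩
  have hTinj : Function.Injective T := by
    intro i j hij
    by_contra h
    have := hTd i j h
    rw [hij, disjoint_self] at this
    exact (hne (T j) (hT j)).ne_empty (by simpa using this)
  have hVinj : Function.Injective V := by
    intro i j hij
    by_contra h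
    have := hVd i j h
    rw [hij, disjoint_self] at this
    exact (hne (V j) (hV j)).ne_empty (by simpa using this)
  -- Hall's theorem
  set t : Fin s → Finset (Fin s) :=
    fun i => Finset.univ.filter (fun j => (T i ∩ V j).Nonempty) with ht
  have hall : ∀ A : Finset (Fin s), A.card ≤ (A.biUnion t).card := by
    intro A
    by_contra hlt
    push_neg at hlt
    set N := A.biUnion t with hN
    set M : Finset (Finset ℕ) := A.image T ∪ Nᶜ.image V with hM
    have hcross : ∀ i ∈ A, ∀ j ∈ Nᶜ, Disjoint (T i) (V j) := by
      intro i hi j hj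
      rw [Finset.mem_compl] at hj
      rw [Finset.disjoint_iff_inter_eq_empty, ← Finset.not_nonempty_iff_eq_empty]
      intro hnon
      exact hj (Finset.mem_biUnion.mpr ⟨i, hi, by simp [ht, hnon]⟩)
    have hdisj_img : Disjoint (A.image T) (Nᶜ.image V) := by
      rw [Finset.disjoint_left]
      rintro x hx hy
      obtain ⟨i, hi, rfl⟩ := Finset.mem_image.mp hx
      obtain ⟨j, hj, hji⟩ := Finset.mem_image.mp hy
      have hd := hcross i hi j hj
      rw [hji, disjoint_self] at hd
      exact (hne (T i) (hT i)).ne_empty (by simpa using hd)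
    have hMsub : M ⊆ H := by
      intro x hx
      rcases Finset.mem_union.mp hx with h | h
      · obtain ⟨i, _, rfl⟩ := Finset.mem_image.mp h; exact hT i
      · obtain ⟨j, _, rfl⟩ := Finset.mem_image.mp h; exact hV j
    have hMpd : (M : Set (Finset ℕ)).PairwiseDisjoint id := by
      intro x hx y hy hxy
      rw [Finset.mem_coe, hM, Finset.mem_union] at hx hy
      have key : ∀ a b : Finset ℕ,
          (a ∈ A.image T ∨ a ∈ Nᶜ.image V) → (b ∈ A.image T ∨ b ∈ Nᶜ.image V) →
          a ≠ b → Disjoint a b := by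
        rintro a b (ha | ha) (hb | hb) hab
        · obtain ⟨i, hi, rfl⟩ := Finset.mem_image.mp ha
          obtain ⟨j, hj, rfl⟩ := Finset.mem_image.mp hb
          exact hTd i j (fun h => hab (by rw [h]))
        · obtain ⟨i, hi, rfl⟩ := Finset.mem_image.mp ha
          obtain ⟨j, hj, rfl⟩ := Finset.mem_image.mp hb
          exact hcross i hi j hj
        · obtain ⟨i, hi, rfl⟩ := Finset.mem_image.mp ha
          obtain ⟨j, hj, rfl⟩ := Finset.mem_image.mp hb
          exact (hcross j hj i hi).symm
        · obtain ⟨i, hi, rfl⟩ := Finset.mem_image.mp ha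
          obtain ⟨j, hj, rfl⟩ := Finset.mem_image.mp hb
          exact hVd i j (fun h => hab (by rw [h]))
      exact key x y hx hy hxy
    have hcard : M.card = A.card + Nᶜ.card := by
      rw [hM, Finset.card_union_of_disjoint hdisj_img,
        Finset.card_image_of_injective _ hTinj,
        Finset.card_image_of_injective _ hVinj]
    have hNc : Nᶜ.card = s - N.card := by
      rw [Finset.card_compl, Fintype.card_fin]
    have hNle : N.card ≤ s := by
      have := Finset.card_le_univ N
      simpa using this
    have hle := hbound M hMsub hMpd
    omega
  obtain ⟨f, hfinj, hf⟩ :=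
    (Finset.all_card_le_biUnion_card_iff_existsInjective' t).mp hall
  refine ⟨Equiv.ofBijective f (Finite.injective_iff_bijective.mp hfinj), fun i => ?_⟩
  have := hf i
  simp only [ht, Finset.mem_filter] at this
  exact this.2
end

section
/- Let H be a k-uniform hypergraph with matching number s, and let H^s be the family of all ks-element sets of the form T_1 ∪ ... ∪ T_s where T_1,...,T_s ∈ H form a matching. Then H^s is s-intersecting: any two members of H^s intersect in at least s elements. -/
/-- If `H` is a `k`-graph with matching number `s`, then the family
`H^s` of unions of matchings of size `s` is `s`-intersecting. -/
theorem stmt1 (n k s : ℕ) (hk : 1 ≤ k) (H : Finset (Finset ℕ))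
    (hH : H ⊆ (Finset.range n).powersetCard k)
    (hν : matchingNumber H = s)
    (T V : Fin s → Finset ℕ)
    (hT : ∀ i, T i ∈ H) (hV : ∀ i, V i ∈ H)
    (hTd : ∀ i j, i ≠ j → Disjoint (T i) (T j))
    (hVd : ∀ i j, i ≠ j → Disjoint (V i) (V j)) :
    s ≤ ((Finset.univ.biUnion T) ∩ (Finset.univ.biUnion V)).card := by
  by_contra hcon
  push_neg at hcon
  set X := (Finset.univ.biUnion T) ∩ (Finset.univ.biUnion V) with hX
  have hcard : ∀ F ∈ H, F.card = k := fun F hF => (Finset.mem_powersetCard.mp (hH hF)).2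
  -- find j with T j disjoint from X
  have hj : ∃ j : Fin s, Disjoint (T j) X := by
    by_contra h
    push_neg at h
    have hne : ∀ i, ((T i) ∩ X).Nonempty := fun i =>
      Finset.not_disjoint_iff_nonempty_inter.mp (h i)
    choose f hf using hne
    have hinj : Function.Injective f := by
      intro a b hab
      by_contra hne2
      exact (Finset.disjoint_left.mp (hTd a b hne2)
        (Finset.mem_of_mem_inter_left (hf a)))
        (hab ▸ Finset.mem_of_mem_inter_left (hf b))
    have : s ≤ X.card := by
      have := Finset.card_le_card_of_injOn (s := Finset.univ) f
        (fun i _ => Finset.mem_of_mem_inter_right (hf i)) hinj.injOn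
      simpa using this
    omega
  obtain ⟨j, hjX⟩ := hj
  have hTjA : T j ⊆ Finset.univ.biUnion T := fun x hx =>
    Finset.mem_biUnion.mpr ⟨j, Finset.mem_univ j, hx⟩
  have hTjB : Disjoint (T j) (Finset.univ.biUnion V) := by
    rw [Finset.disjoint_left]
    intro x hx hxB
    exact Finset.disjoint_left.mp hjX hx (Finset.mem_inter.mpr ⟨hTjA hx, hxB⟩)
  have hTjV : ∀ i, Disjoint (T j) (V i) := fun i =>
    hTjB.mono_right (fun x hx => Finset.mem_biUnion.mpr ⟨i, Finset.mem_univ i, hx⟩)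
  have hTne : (T j).Nonempty := Finset.card_pos.mp (by rw [hcard _ (hT j)]; omega)
  have hVne : ∀ i, (V i).Nonempty := fun i =>
    Finset.card_pos.mp (by rw [hcard _ (hV i)]; omega)
  have hVinj : Function.Injective V := by
    intro a b hab
    by_contra h
    have hd := hVd a b h
    rw [hab, disjoint_self] at hd
    exact (hVne b).ne_empty hd
  have hTnotV : T j ∉ Finset.image V Finset.univ := by
    intro hmem
    obtain ⟨i, _, hi⟩ := Finset.mem_image.mp hmem
    have := hTjV i
    rw [← hi, disjoint_self] at this
    exact (hVne i).ne_empty this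
  set M : Finset (Finset ℕ) := insert (T j) (Finset.image V Finset.univ) with hM
  have hMH : M ⊆ H := by
    intro F hF
    rcases Finset.mem_insert.mp hF with h | h
    · exact h ▸ hT j
    · obtain ⟨i, _, hi⟩ := Finset.mem_image.mp h
      exact hi ▸ hV i
  have hMcard : M.card = s + 1 := by
    rw [hM, Finset.card_insert_of_notMem hTnotV,
      Finset.card_image_of_injective _ hVinj, Finset.card_univ, Fintype.card_fin]
  have hMpd : (M : Set (Finset ℕ)).PairwiseDisjoint id := by
    intro x hx y hy hxy
    simp only [hM, Finset.coe_insert, Set.mem_insert_iff, Finset.coe_image,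
      Set.mem_image, Finset.mem_coe] at hx hy
    rcases hx with rfl | ⟨a, _, rfl⟩ <;> rcases hy with rfl | ⟨b, _, rfl⟩
    · exact absurd rfl hxy
    · exact hTjV b
    · exact (hTjV a).symm
    · exact hVd a b (fun h => hxy (by rw [h]))
  have hmem : s + 1 ∈ {m | ∃ M : Finset (Finset ℕ), M ⊆ H ∧ M.card = m ∧
      (M : Set (Finset ℕ)).PairwiseDisjoint id} := ⟨M, hMH, hMcard, hMpd⟩
  have hbdd : BddAbove {m | ∃ M : Finset (Finset ℕ), M ⊆ H ∧ M.card = m ∧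
      (M : Set (Finset ℕ)).PairwiseDisjoint id} :=
    ⟨H.card, fun m ⟨M', hM'H, hM'c, _⟩ => hM'c ▸ Finset.card_le_card hM'H⟩
  have : s + 1 ≤ matchingNumber H := le_csSup hbdd hmem
  omega
end

section
/- Let H ⊆ binom([n],3) be a 2-resilient 3-graph with matching number s. Then H does not contain a pseudo sunflower of size 3s+1, i.e., there are no distinct edges S_0, S_1, ..., S_{3s} ∈ H and a set C ⊊ S_0 such that the sets S_i \ C (0 ≤ i ≤ 3s) are pairwise disjoint. -/
lemma matching_bdd (H : Finset (Finset ℕ)) :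
    BddAbove {m | ∃ M : Finset (Finset ℕ), M ⊆ H ∧ M.card = m ∧
      (M : Set (Finset ℕ)).PairwiseDisjoint id} :=
  ⟨H.card, fun m ⟨M, hM, hc, _⟩ => hc ▸ Finset.card_le_card hM⟩

lemma matching_mem (H : Finset (Finset ℕ)) :
    matchingNumber H ∈ {m | ∃ M : Finset (Finset ℕ), M ⊆ H ∧ M.card = m ∧
      (M : Set (Finset ℕ)).PairwiseDisjoint id} := by
  apply Nat.sSup_mem
  · exact ⟨0, ∅, by simp⟩
  · exact matching_bdd H

/-- A 2-resilient 3-graph with matching number `s` contains no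
pseudo sunflower of size `3s+1`. -/
theorem stmt2 (n s : ℕ) (H : Finset (Finset ℕ))
    (hH : H ⊆ (Finset.range n).powersetCard 3)
    (hres : Resilient 2 H) (hν : matchingNumber H = s) :
    ¬ ∃ (S : Fin (3 * s + 1) → Finset ℕ) (C : Finset ℕ),
      (∀ i, S i ∈ H) ∧ IsPseudoSunflower S C := by
  rintro ⟨S, C, hS, hPS⟩
  obtain ⟨hinj, ⟨j, hjC⟩, hdisj⟩ := hPS
  have hcard : ∀ i, (S i).card = 3 := fun i =>
    (Finset.mem_powersetCard.mp (hH (hS i))).2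
  have hC2 : C.card ≤ 2 := by
    have := Finset.card_lt_card hjC
    have := hcard j
    omega
  have hres' := hres C hC2
  obtain ⟨M, hMsub, hMcard, hMpd⟩ := matching_mem (H.filter fun F => Disjoint F C)
  rw [hres', hν] at hMcard
  have hMH : ∀ e ∈ M, e ∈ H := fun e he => (Finset.mem_filter.mp (hMsub he)).1
  have hMC : ∀ e ∈ M, Disjoint e C := fun e he => (Finset.mem_filter.mp (hMsub he)).2
  set U := M.biUnion id with hU
  have hUcard : U.card ≤ 3 * s := by
    have h1 : U.card = ∑ e ∈ M, e.card := by
      rw [hU]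
      exact Finset.card_biUnion fun x hx y hy hxy =>
        hMpd (Finset.mem_coe.mpr hx) (Finset.mem_coe.mpr hy) hxy
    have h2 : ∑ e ∈ M, e.card = ∑ e ∈ M, 3 :=
      Finset.sum_congr rfl fun e he => (Finset.mem_powersetCard.mp (hH (hMH e he))).2
    rw [h1, h2, Finset.sum_const, hMcard, smul_eq_mul]
    omega
  have hexists : ∃ i, ∀ x ∈ S i \ C, x ∉ U := by
    by_contra h
    push_neg at h
    choose g hg1 hg2 using h
    have ginj : Set.InjOn g (Finset.univ : Finset (Fin (3 * s + 1))) := by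
      intro a _ b _ hab
      by_contra hne
      exact Finset.disjoint_left.mp (hdisj a b hne) (hg1 a) (hab ▸ hg1 b)
    have hle : (Finset.univ : Finset (Fin (3 * s + 1))).card ≤ U.card :=
      Finset.card_le_card_of_injOn g (fun i _ => hg2 i) ginj
    rw [Finset.card_univ, Fintype.card_fin] at hle
    omega
  obtain ⟨i, hi⟩ := hexists
  have hSiM : ∀ e ∈ M, Disjoint (S i) e := by
    intro e he
    rw [Finset.disjoint_left]
    intro x hxS hxe
    by_cases hxC : x ∈ C
    · exact Finset.disjoint_left.mp (hMC e he) hxe hxC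
    · exact hi x (Finset.mem_sdiff.mpr ⟨hxS, hxC⟩) (Finset.mem_biUnion.mpr ⟨e, he, hxe⟩)
  have hSi_not : S i ∉ M := by
    intro hmem
    have hd := hSiM _ hmem
    have hne : (S i).Nonempty := Finset.card_pos.mp (by rw [hcard i]; norm_num)
    exact hne.ne_empty (by simpa using disjoint_self.mp hd)
  have hnew : s + 1 ∈ {m | ∃ M' : Finset (Finset ℕ), M' ⊆ H ∧ M'.card = m ∧
      (M' : Set (Finset ℕ)).PairwiseDisjoint id} := by
    refine ⟨insert (S i) M, ?_, ?_, ?_⟩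
    · intro e he
      rcases Finset.mem_insert.mp he with rfl | he
      · exact hS i
      · exact hMH e he
    · rw [Finset.card_insert_of_notMem hSi_not, hMcard]
    · rw [Finset.coe_insert]
      exact hMpd.insert fun e he _ => hSiM e he
  have hge : s + 1 ≤ matchingNumber H := le_csSup (matching_bdd H) hnew
  omega
end

section
/- Let H ⊆ binom([n],3) be a 2-resilient 3-graph with matching number s. Then for every pair P ∈ binom([n],2), the number of vertices x with P ∪ {x} ∈ H is at most 3s. -/
lemma card_le_matchingNumber {H M : Finset (Finset ℕ)} (hMH : M ⊆ H)
    (hdisj : (M : Set (Finset ℕ)).PairwiseDisjoint id) :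
    M.card ≤ matchingNumber H :=
  le_csSup ⟨H.card, fun m ⟨M', h1, h2, _⟩ => h2 ▸ Finset.card_le_card h1⟩
    ⟨M, hMH, rfl, hdisj⟩

lemma exists_max_matching (H : Finset (Finset ℕ)) :
    ∃ M : Finset (Finset ℕ), M ⊆ H ∧ M.card = matchingNumber H ∧
      (M : Set (Finset ℕ)).PairwiseDisjoint id := by
  have h := Nat.sSup_mem (s := {m | ∃ M : Finset (Finset ℕ), M ⊆ H ∧ M.card = m ∧
      (M : Set (Finset ℕ)).PairwiseDisjoint id})
    ⟨0, ∅, by simp⟩ ⟨H.card, fun m ⟨M', h1, h2, _⟩ => h2 ▸ Finset.card_le_card h1⟩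
  obtain ⟨M, h1, h2, h3⟩ := h
  exact ⟨M, h1, h2, h3⟩

/-- In a 2-resilient 3-graph with matching number `s`, every pair
of vertices is contained in at most `3s` edges. -/
theorem stmt3 (n s : ℕ) (H : Finset (Finset ℕ))
    (hH : H ⊆ (Finset.range n).powersetCard 3)
    (hres : Resilient 2 H) (hν : matchingNumber H = s)
    (P : Finset ℕ) (hP : P.card = 2) :
    ((Finset.range n).filter fun x => P ∪ {x} ∈ H).card ≤ 3 * s := by
  by_contra hcon
  push_neg at hcon
  have hres2 := hres P (by rw [hP])
  obtain ⟨M, hMH, hMcard, hMdisj⟩ := exists_max_matching (H.filter fun F => Disjoint F P)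
  rw [hres2, hν] at hMcard
  have hME : ∀ F ∈ M, F ∈ H ∧ Disjoint F P := by
    intro F hF
    have := hMH hF
    simp only [Finset.mem_filter] at this
    exact this
  set V : Finset ℕ := M.biUnion id with hVdef
  have hVcard : V.card ≤ 3 * s := by
    calc V.card ≤ ∑ F ∈ M, (id F).card := Finset.card_biUnion_le
    _ = ∑ F ∈ M, 3 := by
        apply Finset.sum_congr rfl
        intro F hF
        have := hH (hME F hF).1
        simp only [Finset.mem_powersetCard] at this
        exact this.2
    _ = 3 * s := by rw [Finset.sum_const, hMcard]; ring
  have hex : ∃ x ∈ (Finset.range n).filter fun x => P ∪ {x} ∈ H, x ∉ V := by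
    by_contra hsub
    push_neg at hsub
    have : ((Finset.range n).filter fun x => P ∪ {x} ∈ H) ⊆ V := hsub
    exact absurd (Finset.card_le_card this) (by omega)
  obtain ⟨x, hxL, hxV⟩ := hex
  simp only [Finset.mem_filter] at hxL
  have hxH : P ∪ {x} ∈ H := hxL.2
  have hnotmem : P ∪ {x} ∉ M := by
    intro hmem
    have hd := (hME _ hmem).2
    have : P ⊆ P ∪ {x} := Finset.subset_union_left
    have := hd.mono_left this
    rw [disjoint_self] at this
    have : P = ⊥ := this
    simp [this] at hP
  have hdisjx : ∀ F ∈ M, Disjoint (P ∪ {x}) F := by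
    intro F hF
    apply Finset.disjoint_union_left.2
    refine ⟨(hME F hF).2.symm, ?_⟩
    rw [Finset.disjoint_singleton_left]
    intro hxF
    exact hxV (Finset.mem_biUnion.2 ⟨F, hF, hxF⟩)
  have hM' : ((insert (P ∪ {x}) M : Finset (Finset ℕ)) : Set (Finset ℕ)).PairwiseDisjoint id := by
    rw [Finset.coe_insert]
    apply hMdisj.insert
    intro F hF _
    exact hdisjx F hF
  have hle : (insert (P ∪ {x}) M).card ≤ matchingNumber H := by
    apply card_le_matchingNumber _ hM'
    intro F hF
    rcases Finset.mem_insert.1 hF with h | h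
    · exact h ▸ hxH
    · exact (hME F h).1
  rw [Finset.card_insert_of_notMem hnotmem, hMcard, hν] at hle
  omega
end

section
/- Let G be a (2-uniform) graph containing no pseudo sunflower of size three. Then G is a subgraph of a triangle or a subgraph of a 4-cycle. In particular |G| ≤ 4, and every vertex of G has degree at most 2. -/
/-!
A pseudo sunflower with centre `{w}` forbids, for two edges through `w`, a third edge meeting
neither of them outside `w`; in particular no three edges share a vertex. Centre `∅` forbids three
pairwise disjoint edges. So either `G` has at most two edges, or it has edges `vb`, `vc` and a
third edge, which then has the form `bd`. Any further edge avoids `v` and `b`, hence contains `c`,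
and, looking at the two edges through `b`, also `d`; so `G` lies in the 4-cycle `cvbd`, which is
the triangle `vbc` when `d = c`.
-/

open Finset

lemma eq_pair_of_card_eq_two {α : Type*} [DecidableEq α] {s : Finset α} {x y : α}
    (hs : #s = 2) (hx : x ∈ s) (hy : y ∈ s) (hxy : x ≠ y) : s = {x, y} :=
  (eq_of_subset_of_card_le (insert_subset hx (singleton_subset_iff.2 hy))
    (by rw [hs, card_pair hxy])).symm

lemma exists_eq_pair_of_mem {α : Type*} [DecidableEq α] {s : Finset α} {x : α}
    (hs : #s = 2) (hx : x ∈ s) : ∃ y, x ≠ y ∧ s = {x, y} := by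
  obtain ⟨y, hy, hyx⟩ := (one_lt_card_iff_nontrivial.1 (by omega : 1 < #s)).exists_ne x
  exact ⟨y, hyx.symm, eq_pair_of_card_eq_two hs hx hy hyx.symm⟩

lemma exists_subset_cycle4_of_card_le_two {G : Finset (Finset ℕ)} (hG : ∀ E ∈ G, #E = 2)
    (h : #G ≤ 2) : ∃ a b c d : ℕ, G ⊆ {({a, b} : Finset ℕ), {b, c}, {c, d}, {d, a}} := by
  interval_cases hcard : #G
  · exact ⟨0, 0, 0, 0, by simp [card_eq_zero.1 hcard]⟩
  · obtain ⟨e, rfl⟩ := card_eq_one.1 hcard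
    obtain ⟨x, y, -, rfl⟩ := card_eq_two.1 (hG e (mem_singleton_self e))
    exact ⟨x, y, y, y, by simp⟩
  · obtain ⟨e₁, e₂, -, rfl⟩ := card_eq_two.1 hcard
    obtain ⟨x, y, -, rfl⟩ := card_eq_two.1 (hG e₁ (by simp))
    obtain ⟨z, w, -, rfl⟩ := card_eq_two.1 (hG e₂ (by simp))
    exact ⟨x, y, z, w, by simp [insert_subset_iff]⟩

def PseudoSunflowerFree (r : ℕ) (G : Finset (Finset ℕ)) : Prop :=
  ¬ ∃ (S : Fin r → Finset ℕ) (C : Finset ℕ), (∀ i, S i ∈ G) ∧ IsPseudoSunflower S C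

section PseudoSunflowerFree

variable {G : Finset (Finset ℕ)}

lemma not_pseudoSunflowerFree_three {e₀ e₁ e₂ C : Finset ℕ}
    (h₀ : e₀ ∈ G) (h₁ : e₁ ∈ G) (h₂ : e₂ ∈ G) (h₀₁ : e₀ ≠ e₁) (h₀₂ : e₀ ≠ e₂) (h₁₂ : e₁ ≠ e₂)
    (hC : C ⊂ e₀) (d₀₁ : Disjoint (e₀ \ C) (e₁ \ C)) (d₀₂ : Disjoint (e₀ \ C) (e₂ \ C))
    (d₁₂ : Disjoint (e₁ \ C) (e₂ \ C)) : ¬ PseudoSunflowerFree 3 G := by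
  refine fun hps => hps ⟨![e₀, e₁, e₂], C, ?_, ?_, ⟨0, hC⟩, ?_⟩
  · intro i; fin_cases i <;> assumption
  · intro i j hij; fin_cases i <;> fin_cases j <;> simp_all
  · intro i j hij; fin_cases i <;> fin_cases j <;> simp_all [disjoint_comm]

lemma exists_ne_mem_of_mem_of_mem (hG : ∀ E ∈ G, #E = 2) (hps : PseudoSunflowerFree 3 G)
    {f₁ f₂ e : Finset ℕ} {w : ℕ} (h₁ : f₁ ∈ G) (h₂ : f₂ ∈ G) (he : e ∈ G) (h₁₂ : f₁ ≠ f₂)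
    (he₁ : e ≠ f₁) (he₂ : e ≠ f₂) (hw₁ : w ∈ f₁) (hw₂ : w ∈ f₂) :
    ∃ x ∈ e, x ≠ w ∧ (x ∈ f₁ ∨ x ∈ f₂) := by
  by_contra! hmiss
  have hC : {w} ⊂ f₁ :=
    (singleton_subset_iff.2 hw₁).ssubset_of_ne fun h => by simpa [← h] using hG _ h₁
  have d₁₂ : Disjoint (f₁ \ {w}) (f₂ \ {w}) := by
    refine disjoint_left.2 fun x hx₁ hx₂ => h₁₂ ?_
    simp only [mem_sdiff, mem_singleton] at hx₁ hx₂
    exact (eq_pair_of_card_eq_two (hG _ h₁) hw₁ hx₁.1 (Ne.symm hx₁.2)).trans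
      (eq_pair_of_card_eq_two (hG _ h₂) hw₂ hx₂.1 (Ne.symm hx₂.2)).symm
  refine not_pseudoSunflowerFree_three h₁ h₂ he h₁₂ he₁.symm he₂.symm hC d₁₂ ?_ ?_ hps <;>
    refine disjoint_right.2 fun x hxe hxf => ?_ <;>
    simp only [mem_sdiff, mem_singleton] at hxe hxf
  exacts [(hmiss x hxe.1 hxe.2).1 hxf.1, (hmiss x hxe.1 hxe.2).2 hxf.1]

lemma notMem_of_mem_of_mem (hG : ∀ E ∈ G, #E = 2) (hps : PseudoSunflowerFree 3 G)
    {f₁ f₂ e : Finset ℕ} {w : ℕ} (h₁ : f₁ ∈ G) (h₂ : f₂ ∈ G) (he : e ∈ G) (h₁₂ : f₁ ≠ f₂)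
    (he₁ : e ≠ f₁) (he₂ : e ≠ f₂) (hw₁ : w ∈ f₁) (hw₂ : w ∈ f₂) : w ∉ e := by
  intro hwe
  obtain ⟨x, hxe, hxw, hx⟩ := exists_ne_mem_of_mem_of_mem hG hps h₁ h₂ he h₁₂ he₁ he₂ hw₁ hw₂
  have he_eq : e = {w, x} := eq_pair_of_card_eq_two (hG _ he) hwe hxe hxw.symm
  rcases hx with hx | hx
  · exact he₁ (he_eq.trans (eq_pair_of_card_eq_two (hG _ h₁) hw₁ hx hxw.symm).symm)
  · exact he₂ (he_eq.trans (eq_pair_of_card_eq_two (hG _ h₂) hw₂ hx hxw.symm).symm)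

lemma card_filter_mem_le_two (hG : ∀ E ∈ G, #E = 2) (hps : PseudoSunflowerFree 3 G) (v : ℕ) :
    #(G.filter fun E => v ∈ E) ≤ 2 := by
  by_contra! h
  obtain ⟨f₁, h₁, f₂, h₂, e, he, h₁₂, h₁e, h₂e⟩ := two_lt_card.1 h
  rw [mem_filter] at h₁ h₂ he
  exact notMem_of_mem_of_mem hG hps h₁.1 h₂.1 he.1 h₁₂ h₁e.symm h₂e.symm h₁.2 h₂.2 he.2

lemma card_le_two_of_pairwiseDisjoint (hG : ∀ E ∈ G, #E = 2) (hps : PseudoSunflowerFree 3 G)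
    (hdisj : (G : Set (Finset ℕ)).PairwiseDisjoint id) : #G ≤ 2 := by
  by_contra! h
  obtain ⟨e₀, h₀, e₁, h₁, e₂, h₂, h₀₁, h₀₂, h₁₂⟩ := two_lt_card.1 h
  have hC : ∅ ⊂ e₀ := empty_ssubset.2 (card_pos.1 (by rw [hG _ h₀]; norm_num))
  refine not_pseudoSunflowerFree_three h₀ h₁ h₂ h₀₁ h₀₂ h₁₂ hC ?_ ?_ ?_ hps <;>
    rw [sdiff_empty, sdiff_empty]
  exacts [hdisj h₀ h₁ h₀₁, hdisj h₀ h₂ h₀₂, hdisj h₁ h₂ h₁₂]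

lemma subset_cycle4_of_path (hG : ∀ E ∈ G, #E = 2) (hps : PseudoSunflowerFree 3 G)
    {v b c d : ℕ} (hvb : v ≠ b) (hvc : v ≠ c) (hbc : b ≠ c) (hvd : v ≠ d)
    (hb : {v, b} ∈ G) (hc : {v, c} ∈ G) (hd : {b, d} ∈ G) :
    G ⊆ {({c, v} : Finset ℕ), {v, b}, {b, d}, {d, c}} := by
  intro e he
  by_contra hne
  simp only [mem_insert, mem_singleton, not_or] at hne
  obtain ⟨hecv, hevb, hebd, hedc⟩ := hne
  have hevc : e ≠ {v, c} := by rwa [pair_comm]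
  have hvb_vc : ({v, b} : Finset ℕ) ≠ {v, c} :=
    ne_of_mem_of_not_mem' (a := b) (by simp) (by simp [hvb.symm, hbc])
  have hvb_bd : ({v, b} : Finset ℕ) ≠ {b, d} :=
    ne_of_mem_of_not_mem' (a := v) (by simp) (by simp [hvb, hvd])
  have hve : v ∉ e :=
    notMem_of_mem_of_mem hG hps (w := v) hb hc he hvb_vc hevb hevc (by simp) (by simp)
  have hbe : b ∉ e :=
    notMem_of_mem_of_mem hG hps (w := b) hb hd he hvb_bd hevb hebd (by simp) (by simp)
  have hce : c ∈ e := by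
    obtain ⟨x, hxe, hxv, hx⟩ :=
      exists_ne_mem_of_mem_of_mem hG hps (w := v) hb hc he hvb_vc hevb hevc (by simp) (by simp)
    simp only [mem_insert, mem_singleton, hxv, false_or] at hx
    rcases hx with rfl | rfl
    exacts [absurd hxe hbe, hxe]
  have hdc : d ≠ c := by
    rintro rfl
    exact notMem_of_mem_of_mem hG hps (w := d) hc hd he
      (ne_of_mem_of_not_mem' (a := v) (by simp) (by simp [hvb, hvc])) hevc hebd
      (by simp) (by simp) hce
  obtain ⟨y, hye, hyb, hy⟩ :=
    exists_ne_mem_of_mem_of_mem hG hps (w := b) hb hd he hvb_bd hevb hebd (by simp) (by simp)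
  simp only [mem_insert, mem_singleton, hyb, or_false, false_or] at hy
  rcases hy with rfl | rfl
  exacts [hve hye, hedc (eq_pair_of_card_eq_two (hG _ he) hye hce hdc)]

lemma exists_subset_cycle4 (hG : ∀ E ∈ G, #E = 2) (hps : PseudoSunflowerFree 3 G) :
    ∃ a b c d : ℕ, G ⊆ {({a, b} : Finset ℕ), {b, c}, {c, d}, {d, a}} := by
  by_cases hdisj : (G : Set (Finset ℕ)).PairwiseDisjoint id
  · exact exists_subset_cycle4_of_card_le_two hG (card_le_two_of_pairwiseDisjoint hG hps hdisj)
  obtain ⟨f₁, h₁, f₂, h₂, h₁₂, hf⟩ : ∃ f₁ ∈ G, ∃ f₂ ∈ G, f₁ ≠ f₂ ∧ ¬Disjoint f₁ f₂ := by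
    simpa [Set.PairwiseDisjoint, Set.Pairwise, Function.onFun] using hdisj
  obtain ⟨v, hv₁, hv₂⟩ := not_disjoint_iff.1 hf
  obtain ⟨b, hvb, rfl⟩ := exists_eq_pair_of_mem (hG _ h₁) hv₁
  obtain ⟨c, hvc, rfl⟩ := exists_eq_pair_of_mem (hG _ h₂) hv₂
  have hbc : b ≠ c := by rintro rfl; exact h₁₂ rfl
  by_cases hpair : G ⊆ {{v, b}, {v, c}}
  · exact exists_subset_cycle4_of_card_le_two hG ((card_le_card hpair).trans card_le_two)
  obtain ⟨e, he, hne⟩ := not_subset.1 hpair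
  simp only [mem_insert, mem_singleton, not_or] at hne
  obtain ⟨he₁, he₂⟩ := hne
  have hve : v ∉ e := notMem_of_mem_of_mem hG hps h₁ h₂ he h₁₂ he₁ he₂ hv₁ hv₂
  obtain ⟨x, hxe, hxv, hx⟩ := exists_ne_mem_of_mem_of_mem hG hps h₁ h₂ he h₁₂ he₁ he₂ hv₁ hv₂
  obtain ⟨d, -, rfl⟩ := exists_eq_pair_of_mem (hG _ he) hxe
  have hvd : v ≠ d := fun h => hve (by simp [h])
  simp only [mem_insert, mem_singleton, hxv, false_or] at hx
  rcases hx with rfl | rfl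
  · exact ⟨c, v, x, d, subset_cycle4_of_path hG hps hvb hvc hbc hvd h₁ h₂ he⟩
  · exact ⟨b, v, x, d, subset_cycle4_of_path hG hps hvc hvb hbc.symm hvd h₂ h₁ he⟩

end PseudoSunflowerFree

/-- A graph containing no pseudo sunflower of size three is a
subgraph of a triangle or of a 4-cycle; in particular it has at most 4 edges
and maximum degree at most 2. -/
theorem stmt4 (G : Finset (Finset ℕ)) (hG : ∀ E ∈ G, E.card = 2)
    (hps : ¬ ∃ (S : Fin 3 → Finset ℕ) (C : Finset ℕ),
      (∀ i, S i ∈ G) ∧ IsPseudoSunflower S C) :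
    ((∃ a b c : ℕ, G ⊆ {({a, b} : Finset ℕ), {b, c}, {a, c}}) ∨
      (∃ a b c d : ℕ, G ⊆ {({a, b} : Finset ℕ), {b, c}, {c, d}, {d, a}})) ∧
    G.card ≤ 4 ∧ (∀ v : ℕ, (G.filter fun E => v ∈ E).card ≤ 2) := by
  -- a triangle `abc` is the degenerate 4-cycle `abcc`, so the second alternative always holds
  obtain ⟨a, b, c, d, hsub⟩ := exists_subset_cycle4 hG hps
  exact ⟨Or.inr ⟨a, b, c, d, hsub⟩, (card_le_card hsub).trans card_le_four,
    card_filter_mem_le_two hG hps⟩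
end

section
/- Let d ≥ 3 and let G_1, G_2, G_3 be graphs of maximum degree at most d with |G_i| > 3d for each i. Then there exist pairwise disjoint edges E_1 ∈ G_1, E_2 ∈ G_2, E_3 ∈ G_3. -/
/-- Two distinct elements of a 2-element finset determine it. -/
lemma pair_eq_of_card_two {s : Finset ℕ} (hs : s.card = 2) {u v : ℕ}
    (hu : u ∈ s) (hv : v ∈ s) (huv : u ≠ v) : s = {u, v} := by
  have hsub : ({u, v} : Finset ℕ) ⊆ s := by
    intro z hz
    simp only [Finset.mem_insert, Finset.mem_singleton] at hz
    rcases hz with rfl | rfl <;> assumption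
  have hcard : s.card ≤ ({u, v} : Finset ℕ).card := by
    rw [hs, Finset.card_insert_of_notMem (by simp [huv]), Finset.card_singleton]
  exact (Finset.eq_of_subset_of_card_le hsub hcard).symm

/-- At most `2d` edges meet a fixed pair of vertices. -/
lemma card_meet_pair_le (G : Finset (Finset ℕ)) (d : ℕ)
    (hdeg : ∀ v : ℕ, (G.filter fun E => v ∈ E).card ≤ d) (u v : ℕ) :
    (G.filter fun E => ¬ Disjoint E ({u, v} : Finset ℕ)).card ≤ 2 * d := by
  have hsub : G.filter (fun E => ¬ Disjoint E ({u, v} : Finset ℕ)) ⊆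
      (G.filter fun E => u ∈ E) ∪ (G.filter fun E => v ∈ E) := by
    intro E hE
    simp only [Finset.mem_filter, Finset.mem_union] at *
    obtain ⟨hEG, hnd⟩ := hE
    rw [Finset.not_disjoint_iff] at hnd
    obtain ⟨x, hx2, hx1⟩ := hnd
    simp only [Finset.mem_insert, Finset.mem_singleton] at hx1
    rcases hx1 with rfl | rfl
    · exact Or.inl ⟨hEG, hx2⟩
    · exact Or.inr ⟨hEG, hx2⟩
  calc (G.filter fun E => ¬ Disjoint E ({u, v} : Finset ℕ)).card
      ≤ ((G.filter fun E => u ∈ E) ∪ (G.filter fun E => v ∈ E)).card :=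
        Finset.card_le_card hsub
    _ ≤ (G.filter fun E => u ∈ E).card + (G.filter fun E => v ∈ E).card :=
        Finset.card_union_le _ _
    _ ≤ 2 * d := by have h1 := hdeg u; have h2 := hdeg v; omega

/-- A family of edges with more than `d` members, inside a graph of max degree `≤ d`,
contains two disjoint edges. -/
lemma exists_disjoint_pair (d : ℕ) (hd : 3 ≤ d) (G A : Finset (Finset ℕ))
    (hAG : A ⊆ G) (h2 : ∀ e ∈ A, e.card = 2)
    (hdeg : ∀ v : ℕ, (G.filter fun E => v ∈ E).card ≤ d)
    (hcard : d < A.card) :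
    ∃ e ∈ A, ∃ f ∈ A, Disjoint e f := by
  by_contra hcon
  push_neg at hcon
  -- A is an intersecting family
  have hmeet : ∀ e ∈ A, ∀ f ∈ A, ∃ x, x ∈ e ∧ x ∈ f := by
    intro e he f hf
    have := hcon e he f hf
    rw [Finset.not_disjoint_iff] at this
    exact this
  -- no vertex lies in all edges of A
  have hstar : ∀ v : ℕ, ∃ e ∈ A, v ∉ e := by
    intro v
    by_contra hv
    push_neg at hv
    have : A ⊆ G.filter fun E => v ∈ E := by
      intro e he
      exact Finset.mem_filter.mpr ⟨hAG he, hv e he⟩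
    have := Finset.card_le_card this
    have := hdeg v
    omega
  -- pick e = {a,b}
  have hAne : A.Nonempty := Finset.card_pos.mp (by omega)
  obtain ⟨e, he⟩ := hAne
  obtain ⟨a, b, hab, rfl⟩ := Finset.card_eq_two.mp (h2 e he)
  -- f avoiding a, must contain b
  obtain ⟨f, hf, haf⟩ := hstar a
  have hbf : b ∈ f := by
    obtain ⟨x, hx1, hx2⟩ := hmeet _ he f hf
    simp only [Finset.mem_insert, Finset.mem_singleton] at hx1
    rcases hx1 with rfl | rfl
    · exact absurd hx2 haf
    · exact hx2
  obtain ⟨c, hcf, hcb⟩ : ∃ c ∈ f, c ≠ b := by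
    obtain ⟨p, q, hpq, rfl⟩ := Finset.card_eq_two.mp (h2 f hf)
    by_cases hpb : p = b
    · exact ⟨q, by simp, by simp [hpq.symm, ← hpb]⟩
    · exact ⟨p, by simp, hpb⟩
  have hfeq : f = {b, c} := pair_eq_of_card_two (h2 f hf) hbf hcf (Ne.symm hcb)
  have hca : c ≠ a := by rintro rfl; rw [hfeq] at haf; simp at haf
  -- g avoiding b, must contain a and c
  obtain ⟨g, hg, hbg⟩ := hstar b
  have hag : a ∈ g := by
    obtain ⟨x, hx1, hx2⟩ := hmeet _ he g hg
    simp only [Finset.mem_insert, Finset.mem_singleton] at hx1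
    rcases hx1 with rfl | rfl
    · exact hx2
    · exact absurd hx2 hbg
  have hcg : c ∈ g := by
    obtain ⟨x, hx1, hx2⟩ := hmeet f hf g hg
    rw [hfeq] at hx1
    simp only [Finset.mem_insert, Finset.mem_singleton] at hx1
    rcases hx1 with rfl | rfl
    · exact absurd hx2 hbg
    · exact hx2
  have hgeq : g = {a, c} := pair_eq_of_card_two (h2 g hg) hag hcg (Ne.symm hca)
  -- every edge of A is one of {a,b}, {b,c}, {a,c}
  have hA3 : A ⊆ {({a, b} : Finset ℕ), {b, c}, {a, c}} := by
    intro h hh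
    obtain ⟨p, q, hpq, rfl⟩ := Finset.card_eq_two.mp (h2 h hh)
    have hsub : ({p, q} : Finset ℕ) ⊆ {a, b, c} := by
      intro z hz
      by_contra hzabc
      simp only [Finset.mem_insert, Finset.mem_singleton] at hz hzabc
      push_neg at hzabc
      obtain ⟨hza, hzb, hzc⟩ := hzabc
      -- the other vertex of h must be in e, f, g simultaneously
      obtain ⟨w, hwz⟩ : ∃ w, ({p, q} : Finset ℕ) = {z, w} ∧ w ≠ z := by
        rcases hz with rfl | rfl
        · exact ⟨q, rfl, hpq.symm⟩
        · exact ⟨p, by rw [Finset.pair_comm], hpq⟩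
      obtain ⟨hzw, hwzne⟩ := hwz
      rw [hzw] at hh
      have h1 := hmeet _ hh _ he
      have h2' := hmeet _ hh f hf
      have h3 := hmeet _ hh g hg
      rw [hfeq] at h2'; rw [hgeq] at h3
      simp only [Finset.mem_insert, Finset.mem_singleton] at h1 h2' h3
      obtain ⟨x1, hx1, hx1'⟩ := h1
      obtain ⟨x2, hx2, hx2'⟩ := h2'
      obtain ⟨x3, hx3, hx3'⟩ := h3
      rcases hx1 with rfl | rfl <;> rcases hx2 with h | h <;>
        rcases hx3 with h' | h' <;>
        first
        | (rcases hx1' with rfl | rfl <;> simp_all)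
        | simp_all
    -- h is a 2-subset of {a,b,c}
    have hpm : p ∈ ({a, b, c} : Finset ℕ) := hsub (by simp)
    have hqm : q ∈ ({a, b, c} : Finset ℕ) := hsub (by simp)
    simp only [Finset.mem_insert, Finset.mem_singleton] at hpm hqm
    simp only [Finset.mem_insert, Finset.mem_singleton]
    rcases hpm with rfl | rfl | rfl <;> rcases hqm with rfl | rfl | rfl <;>
      first
      | (exfalso; exact hpq rfl)
      | simp [Finset.pair_comm]
  have : A.card ≤ 3 := le_trans (Finset.card_le_card hA3)
    (le_trans (Finset.card_insert_le _ _) (by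
      have := Finset.card_insert_le ({b, c} : Finset ℕ) ({({a, c} : Finset ℕ)} : Finset (Finset ℕ))
      simp only [Finset.card_singleton] at this ⊢
      omega))
  omega


/-- Three graphs of maximum degree at most `d` with more than `3d`
edges each admit a cross-matching. -/
theorem stmt6 (d : ℕ) (hd : 3 ≤ d) (G₁ G₂ G₃ : Finset (Finset ℕ))
    (hG₁ : ∀ E ∈ G₁, E.card = 2) (hG₂ : ∀ E ∈ G₂, E.card = 2)
    (hG₃ : ∀ E ∈ G₃, E.card = 2)
    (hd₁ : ∀ v : ℕ, (G₁.filter fun E => v ∈ E).card ≤ d)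
    (hd₂ : ∀ v : ℕ, (G₂.filter fun E => v ∈ E).card ≤ d)
    (hd₃ : ∀ v : ℕ, (G₃.filter fun E => v ∈ E).card ≤ d)
    (hc₁ : 3 * d < G₁.card) (hc₂ : 3 * d < G₂.card) (hc₃ : 3 * d < G₃.card) :
    ∃ E₁ ∈ G₁, ∃ E₂ ∈ G₂, ∃ E₃ ∈ G₃,
      Disjoint E₁ E₂ ∧ Disjoint E₁ E₃ ∧ Disjoint E₂ E₃ := by
  by_contra hcon
  push_neg at hcon
  -- pick E₃ ∈ G₃
  have hG₃ne : G₃.Nonempty := Finset.card_pos.mp (by omega)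
  obtain ⟨E₃, hE₃⟩ := hG₃ne
  obtain ⟨x, y, hxy, hE₃eq⟩ := Finset.card_eq_two.mp (hG₃ E₃ hE₃)
  -- A : edges of G₁ disjoint from E₃ ; C : edges of G₂ disjoint from E₃
  set A := G₁.filter (fun E => Disjoint E E₃) with hAdef
  set C := G₂.filter (fun E => Disjoint E E₃) with hCdef
  have hAcard : d < A.card := by
    have hsplit := Finset.card_filter_add_card_filter_not
      (s := G₁) (p := fun E => Disjoint E E₃)
    rw [← hAdef] at hsplit
    have hle : (G₁.filter fun E => ¬ Disjoint E E₃).card ≤ 2 * d := by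
      rw [hE₃eq]; exact card_meet_pair_le G₁ d hd₁ x y
    omega
  have hCcard : d < C.card := by
    have hsplit := Finset.card_filter_add_card_filter_not
      (s := G₂) (p := fun E => Disjoint E E₃)
    rw [← hCdef] at hsplit
    have hle : (G₂.filter fun E => ¬ Disjoint E E₃).card ≤ 2 * d := by
      rw [hE₃eq]; exact card_meet_pair_le G₂ d hd₂ x y
    omega
  have hAsub : A ⊆ G₁ := Finset.filter_subset _ _
  have hCsub : C ⊆ G₂ := Finset.filter_subset _ _
  have hA2 : ∀ e ∈ A, e.card = 2 := fun e he => hG₁ e (hAsub he)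
  have hC2 : ∀ g ∈ C, g.card = 2 := fun g hg => hG₂ g (hCsub hg)
  -- cross-intersecting: every edge of A meets every edge of C
  have hAC : ∀ e ∈ A, ∀ g ∈ C, ∃ v, v ∈ e ∧ v ∈ g := by
    intro e he g hg
    have heG := Finset.mem_filter.mp he
    have hgG := Finset.mem_filter.mp hg
    by_contra hdis
    push_neg at hdis
    have : Disjoint e g := Finset.disjoint_left.mpr (fun v hv hv' => hdis v hv hv')
    exact hcon e heG.1 g hgG.1 E₃ hE₃ this heG.2 hgG.2
  -- A contains two disjoint edges
  obtain ⟨e, he, f, hf, hef⟩ := exists_disjoint_pair d hd G₁ A hAsub hA2 hd₁ hAcard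
  obtain ⟨a, b, hab, heeq⟩ := Finset.card_eq_two.mp (hA2 e he)
  obtain ⟨p, q, hpq, hfeq⟩ := Finset.card_eq_two.mp (hA2 f hf)
  have hae : a ∈ e := by rw [heeq]; simp
  have hbe : b ∈ e := by rw [heeq]; simp
  have hpf : p ∈ f := by rw [hfeq]; simp
  have hqf : q ∈ f := by rw [hfeq]; simp
  -- distinctness of the four vertices
  have hap : a ≠ p := by rintro rfl; exact Finset.disjoint_left.mp hef hae hpf
  have haq : a ≠ q := by rintro rfl; exact Finset.disjoint_left.mp hef hae hqf
  have hbp : b ≠ p := by rintro rfl; exact Finset.disjoint_left.mp hef hbe hpf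
  have hbq : b ≠ q := by rintro rfl; exact Finset.disjoint_left.mp hef hbe hqf
  -- every edge of C is a cross edge between e and f
  have hCcross : C ⊆ {({a, p} : Finset ℕ), {a, q}, {b, p}, {b, q}} := by
    intro g hg
    obtain ⟨u, hue, hug⟩ := hAC e he g hg
    obtain ⟨v, hvf, hvg⟩ := hAC f hf g hg
    have huv : u ≠ v := by
      rintro rfl
      exact Finset.disjoint_left.mp hef hue hvf
    have hgeq : g = {u, v} := pair_eq_of_card_two (hC2 g hg) hug hvg huv
    rw [heeq] at hue; rw [hfeq] at hvf
    simp only [Finset.mem_insert, Finset.mem_singleton] at hue hvf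
    simp only [Finset.mem_insert, Finset.mem_singleton]
    rcases hue with rfl | rfl <;> rcases hvf with rfl | rfl <;> simp [hgeq]
  -- hence C is exactly the four cross edges
  have hfour : ({({a, p} : Finset ℕ), {a, q}, {b, p}, {b, q}} :
      Finset (Finset ℕ)).card ≤ 4 := by
    apply le_trans (Finset.card_insert_le _ _)
    have h1 := Finset.card_insert_le ({a, q} : Finset ℕ)
      ({({b, p} : Finset ℕ), {b, q}} : Finset (Finset ℕ))
    have h2 := Finset.card_insert_le ({b, p} : Finset ℕ)
      ({({b, q} : Finset ℕ)} : Finset (Finset ℕ))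
    simp only [Finset.card_singleton] at h1 h2 ⊢
    omega
  have hCeq : C = {({a, p} : Finset ℕ), {a, q}, {b, p}, {b, q}} := by
    apply Finset.eq_of_subset_of_card_le hCcross
    omega
  -- all four cross edges lie in C
  have hapC : ({a, p} : Finset ℕ) ∈ C := by rw [hCeq]; simp
  have haqC : ({a, q} : Finset ℕ) ∈ C := by rw [hCeq]; simp
  have hbpC : ({b, p} : Finset ℕ) ∈ C := by rw [hCeq]; simp
  have hbqC : ({b, q} : Finset ℕ) ∈ C := by rw [hCeq]; simp
  -- pick a third edge h in A
  obtain ⟨h, hh, hhef⟩ : ∃ h ∈ A, h ∉ ({e, f} : Finset (Finset ℕ)) := by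
    by_contra hc
    push_neg at hc
    have : A ⊆ {e, f} := fun z hz => hc z hz
    have := Finset.card_le_card this
    have h2 := Finset.card_insert_le e ({f} : Finset (Finset ℕ))
    simp only [Finset.card_singleton] at h2
    omega
  simp only [Finset.mem_insert, Finset.mem_singleton] at hhef
  push_neg at hhef
  -- h meets all four cross edges; derive h = e or h = f
  obtain ⟨u, hu, hu'⟩ := hAC h hh _ hapC
  obtain ⟨v, hv, hv'⟩ := hAC h hh _ hbqC
  obtain ⟨w, hw, hw'⟩ := hAC h hh _ haqC
  obtain ⟨z, hz, hz'⟩ := hAC h hh _ hbpC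
  simp only [Finset.mem_insert, Finset.mem_singleton] at hu' hv' hw' hz'
  have huv : u ≠ v := by
    rcases hu' with rfl | rfl <;> rcases hv' with h' | h' <;> omega
  have hheq : h = {u, v} := pair_eq_of_card_two (hA2 h hh) hu hv huv
  have hwmem : w = u ∨ w = v := by
    have := hheq ▸ hw
    simpa using this
  have hzmem : z = u ∨ z = v := by
    have := hheq ▸ hz
    simpa using this
  rcases hu' with rfl | rfl <;> rcases hv' with rfl | rfl
  · -- u = a, v = b : h = e
    exact hhef.1 (by rw [hheq, heeq])
  · -- u = a, v = q : then z ∈ {a,q} but z ∈ {b,p}: contradiction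
    rcases hzmem with rfl | rfl <;> rcases hz' with h' | h' <;> omega
  · -- u = p, v = b : then w ∈ {p,b} but w ∈ {a,q}
    rcases hwmem with rfl | rfl <;> rcases hw' with h' | h' <;> omega
  · -- u = p, v = q : h = f
    exact hhef.2 (by rw [hheq, hfeq])
end

section
/- Let H ⊆ binom([n],3) be a 2-resilient 3-graph with matching number s ≥ 2, fix a matching T_1,...,T_s in H with R = T_1 ∪ ⋯ ∪ T_s, and let x ∈ R. Then the link graph H(x,R) := {F \ {x} : F ∈ H, F ∩ R = {x}} does not contain a pseudo sunflower of size 2s. -/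
lemma matching_le_matchingNumber (H M : Finset (Finset ℕ)) (hM : M ⊆ H)
    (hd : (M : Set (Finset ℕ)).PairwiseDisjoint id) : M.card ≤ matchingNumber H := by
  apply le_csSup
  · exact ⟨H.card, by rintro m ⟨N, hN, rfl, -⟩; exact Finset.card_le_card hN⟩
  · exact ⟨M, hM, rfl, hd⟩

lemma nonmem_of_disjoint (M : Finset (Finset ℕ)) (G : Finset ℕ)
    (h : ∀ e ∈ M, Disjoint G e) (hG : G.Nonempty) : G ∉ M := by
  intro hm
  obtain ⟨a, haG⟩ := hG
  exact Finset.disjoint_left.mp (h G hm) haG haG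

/-- Generic extension step: inserting an edge disjoint from all members. -/
lemma insert_matching (M : Finset (Finset ℕ)) (G : Finset ℕ)
    (hd : (M : Set (Finset ℕ)).PairwiseDisjoint id)
    (h : ∀ e ∈ M, Disjoint G e) (hG : G.Nonempty) :
    ((insert G M : Finset (Finset ℕ)) : Set (Finset ℕ)).PairwiseDisjoint id ∧
      (insert G M).card = M.card + 1 := by
  constructor
  · rw [Finset.coe_insert]
    exact hd.insert (fun b hb _ => h b hb)
  · rw [Finset.card_insert_of_notMem (nonmem_of_disjoint M G h hG)]

/-- Let `H` be a 2-resilient 3-graph with matching number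
`s ≥ 2`, `T₁,…,T_s` a matching with union `R`, and `x ∈ R`. Then the link
graph `H(x,R)` contains no pseudo sunflower of size `2s`. -/
theorem stmt15 (n s : ℕ) (hs : 2 ≤ s) (H : Finset (Finset ℕ))
    (hH : H ⊆ (Finset.range n).powersetCard 3)
    (hres : Resilient 2 H) (hν : matchingNumber H = s)
    (T : Fin s → Finset ℕ) (hT : ∀ i, T i ∈ H)
    (hTd : ∀ i j, i ≠ j → Disjoint (T i) (T j))
    (R : Finset ℕ) (hR : R = Finset.univ.biUnion T) (x : ℕ) (hx : x ∈ R) :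
    ¬ ∃ (S : Fin (2 * s) → Finset ℕ) (C : Finset ℕ),
      (∀ i, S i ∈ (H.filter fun F => F ∩ R = {x}).image fun F => F.erase x) ∧
      IsPseudoSunflower S C := by
  rintro ⟨S, C, hmem, hSinj, ⟨i0, hC⟩, hdisj⟩
  classical
  -- cardinality of edges of H
  have hcard3 : ∀ F ∈ H, F.card = 3 := fun F hF => (Finset.mem_powersetCard.mp (hH hF)).2
  -- extract the edges F i with S i = (F i).erase x
  have hFex : ∀ i, ∃ F, F ∈ H ∧ F ∩ R = {x} ∧ (F.erase x) = S i := by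
    intro i
    obtain ⟨F, hF, hFe⟩ := Finset.mem_image.mp (hmem i)
    obtain ⟨hF1, hF2⟩ := Finset.mem_filter.mp hF
    exact ⟨F, hF1, hF2, hFe⟩
  choose F hFH hFR hFS using hFex
  have hxF : ∀ i, x ∈ F i := by
    intro i
    have : x ∈ F i ∩ R := by rw [hFR i]; exact Finset.mem_singleton_self x
    exact (Finset.mem_inter.mp this).1
  have hFi : ∀ i, F i = insert x (S i) := by
    intro i; rw [← hFS i, Finset.insert_erase (hxF i)]
  have hScard : ∀ i, (S i).card = 2 := by
    intro i
    rw [← hFS i, Finset.card_erase_of_mem (hxF i), hcard3 _ (hFH i)]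
  have hxS : ∀ i, x ∉ S i := by
    intro i; rw [← hFS i]; exact Finset.notMem_erase x _
  -- S i is disjoint from R
  have hSR : ∀ i, Disjoint (S i) R := by
    intro i
    rw [Finset.disjoint_left]
    intro a haS haR
    have : a ∈ F i ∩ R := Finset.mem_inter.mpr ⟨by rw [hFi i]; exact Finset.mem_insert_of_mem haS, haR⟩
    rw [hFR i] at this
    exact hxS i (by rwa [Finset.mem_singleton.mp this] at haS)
  -- center facts
  have hCcard : C.card ≤ 1 := by
    have h1 : C.card < (S i0).card := Finset.card_lt_card hC
    rw [hScard i0] at h1; omega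
  have hCS : C ⊆ S i0 := hC.subset
  have hCR : Disjoint C R := Finset.disjoint_of_subset_left hCS (hSR i0)
  have hxC : x ∉ C := fun h => hxS i0 (hCS h)
  -- T facts
  have hTsub : ∀ j, T j ⊆ R := by
    intro j; rw [hR]; exact Finset.subset_biUnion_of_mem T (Finset.mem_univ j)
  have hTne : ∀ j, (T j).Nonempty := by
    intro j
    rw [← Finset.card_pos, hcard3 _ (hT j)]; omega
  obtain ⟨k, -, hxk⟩ := Finset.mem_biUnion.mp (by rw [hR] at hx; exact hx)
  -- the deleted set D
  set D : Finset ℕ := insert x C with hD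
  have hDcard : D.card ≤ 2 := by
    calc D.card ≤ C.card + 1 := Finset.card_insert_le x C
    _ ≤ 2 := by omega
  -- the matching M avoiding D
  have hν' : matchingNumber (H.filter fun F => Disjoint F D) = s := by
    rw [hres D hDcard, hν]
  obtain ⟨M, hMsub, hMcard, hMd⟩ := exists_max_matching (H.filter fun F => Disjoint F D)
  rw [hν'] at hMcard
  have hMH : M ⊆ H := hMsub.trans (Finset.filter_subset _ _)
  have hMD : ∀ e ∈ M, Disjoint e D := fun e he => (Finset.mem_filter.mp (hMsub he)).2
  have hMpd : ∀ e ∈ M, ∀ e' ∈ M, e ≠ e' → Disjoint e e' :=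
    fun e he e' he' hne => hMd he he' hne
  -- the vertex set V of M
  set V : Finset ℕ := M.biUnion id with hV
  have hVcard : V.card = 3 * s := by
    have h1 : V.card = ∑ e ∈ M, (id e).card :=
      Finset.card_biUnion (fun a ha b hb hab => hMpd a ha b hb hab)
    have h2 : ∑ e ∈ M, (id e).card = ∑ _e ∈ M, 3 :=
      Finset.sum_congr rfl (fun e he => hcard3 e (hMH he))
    rw [h1, h2, Finset.sum_const, hMcard, smul_eq_mul, Nat.mul_comm]
  have hxV : x ∉ V := by
    intro h
    obtain ⟨e, he, hxe⟩ := Finset.mem_biUnion.mp h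
    exact Finset.disjoint_left.mp (hMD e he) hxe (Finset.mem_insert_self x C)
  have hCV : ∀ c ∈ C, c ∉ V := by
    intro c hc h
    obtain ⟨e, he, hce⟩ := Finset.mem_biUnion.mp h
    exact Finset.disjoint_left.mp (hMD e he) hce (Finset.mem_insert_of_mem hc)
  have hsubV : ∀ e ∈ M, e ⊆ V := by
    intro e he a ha; exact Finset.mem_biUnion.mpr ⟨e, he, ha⟩
  -- contradiction machinery: no matching of size s+1 in H
  have hcontra : ∀ M' : Finset (Finset ℕ), M' ⊆ H →
      (M' : Set (Finset ℕ)).PairwiseDisjoint id → M'.card ≤ s := by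
    intro M' h1 h2
    have := matching_le_matchingNumber H M' h1 h2
    omega
  -- Step 2: every petal meets V
  have hpetal : ∀ i, ((S i \ C) ∩ V).Nonempty := by
    intro i
    by_contra hne
    rw [Finset.not_nonempty_iff_eq_empty, ← Finset.disjoint_iff_inter_eq_empty] at hne
    have hFV : ∀ e ∈ M, Disjoint (F i) e := by
      intro e he
      rw [Finset.disjoint_left]
      intro a haF hae
      have haV : a ∈ V := hsubV e he hae
      rw [hFi i] at haF
      rcases Finset.mem_insert.mp haF with h | h
      · exact hxV (h ▸ haV)
      · by_cases hc : a ∈ C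
        · exact hCV a hc haV
        · exact Finset.disjoint_left.mp hne (Finset.mem_sdiff.mpr ⟨h, hc⟩) haV
    have hFne : (F i).Nonempty := ⟨x, hxF i⟩
    obtain ⟨pd, hc⟩ := insert_matching M (F i) hMd hFV hFne
    have := hcontra (insert (F i) M) (by
      intro G hG
      rcases Finset.mem_insert.mp hG with h | h
      · exact h ▸ hFH i
      · exact hMH h) pd
    omega
  -- Step 4: every T j meets V
  have hTV : ∀ j, (T j ∩ V).Nonempty := by
    intro j
    by_contra hne
    rw [Finset.not_nonempty_iff_eq_empty, ← Finset.disjoint_iff_inter_eq_empty] at hne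
    have hTVd : ∀ e ∈ M, Disjoint (T j) e := by
      intro e he
      exact Finset.disjoint_of_subset_right (hsubV e he) hne
    obtain ⟨pd, hc⟩ := insert_matching M (T j) hMd hTVd (hTne j)
    have := hcontra (insert (T j) M) (by
      intro G hG
      rcases Finset.mem_insert.mp hG with h | h
      · exact h ▸ hT j
      · exact hMH h) pd
    omega
  -- choose representatives
  choose v hv using hpetal
  have hvP : ∀ i, v i ∈ S i \ C := fun i => (Finset.mem_inter.mp (hv i)).1
  have hvV : ∀ i, v i ∈ V := fun i => (Finset.mem_inter.mp (hv i)).2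
  have hvinj : Function.Injective v := by
    intro i j hij
    by_contra hne
    exact Finset.disjoint_left.mp (hdisj i j hne) (hvP i) (hij ▸ hvP j)
  choose t ht using hTV
  have htT : ∀ j, t j ∈ T j := fun j => (Finset.mem_inter.mp (ht j)).1
  have htV : ∀ j, t j ∈ V := fun j => (Finset.mem_inter.mp (ht j)).2
  have htinj : Function.Injective t := by
    intro i j hij
    by_contra hne
    exact Finset.disjoint_left.mp (hTd i j hne) (htT i) (hij ▸ htT j)
  -- counting
  set Vp : Finset ℕ := Finset.image v Finset.univ with hVp
  set Vt : Finset ℕ := Finset.image t Finset.univ with hVt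
  have hVpcard : Vp.card = 2 * s := by
    rw [hVp, Finset.card_image_of_injective _ hvinj, Finset.card_univ, Fintype.card_fin]
  have hVtcard : Vt.card = s := by
    rw [hVt, Finset.card_image_of_injective _ htinj, Finset.card_univ, Fintype.card_fin]
  have hVpsub : Vp ⊆ V \ R := by
    intro a ha
    obtain ⟨i, -, rfl⟩ := Finset.mem_image.mp ha
    exact Finset.mem_sdiff.mpr ⟨hvV i,
      fun h => Finset.disjoint_left.mp (hSR i) (Finset.mem_sdiff.mp (hvP i)).1 h⟩
  have hVtsub : Vt ⊆ V ∩ R := by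
    intro a ha
    obtain ⟨j, -, rfl⟩ := Finset.mem_image.mp ha
    exact Finset.mem_inter.mpr ⟨htV j, hTsub j (htT j)⟩
  have hsplit : (V ∩ R).card + (V \ R).card = 3 * s := by
    rw [Finset.card_inter_add_card_sdiff, hVcard]
  have hple : 2 * s ≤ (V \ R).card := hVpcard ▸ Finset.card_le_card hVpsub
  have htle : s ≤ (V ∩ R).card := hVtcard ▸ Finset.card_le_card hVtsub
  have hVpe : Vp = V \ R := Finset.eq_of_subset_of_card_le hVpsub (by omega)
  have hVte : Vt = V ∩ R := Finset.eq_of_subset_of_card_le hVtsub (by omega)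
  -- exactly-once facts
  have hPonce : ∀ i, ∀ w ∈ (S i \ C) ∩ V, w = v i := by
    intro i w hw
    obtain ⟨hw1, hw2⟩ := Finset.mem_inter.mp hw
    have hwR : w ∉ R := fun h =>
      Finset.disjoint_left.mp (hSR i) (Finset.mem_sdiff.mp hw1).1 h
    have : w ∈ Vp := hVpe ▸ Finset.mem_sdiff.mpr ⟨hw2, hwR⟩
    obtain ⟨i', -, hi'⟩ := Finset.mem_image.mp this
    by_cases h : i' = i
    · rw [← hi', h]
    · exact absurd (hi' ▸ hvP i') (fun hh =>
        Finset.disjoint_left.mp (hdisj i i' (fun hc => h hc.symm)) hw1 hh)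
  have hTonce : ∀ j, ∀ w ∈ T j ∩ V, w = t j := by
    intro j w hw
    obtain ⟨hw1, hw2⟩ := Finset.mem_inter.mp hw
    have : w ∈ Vt := hVte ▸ Finset.mem_inter.mpr ⟨hw2, hTsub j hw1⟩
    obtain ⟨j', -, hj'⟩ := Finset.mem_image.mp this
    by_cases h : j' = j
    · rw [← hj', h]
    · exact absurd (hj' ▸ htT j') (fun hh =>
        Finset.disjoint_left.mp (hTd j j' (fun hc => h hc.symm)) hw1 hh)
  -- pick j ≠ k
  have hj : ∃ j : Fin s, j ≠ k := by
    by_cases h : k = ⟨0, by omega⟩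
    · exact ⟨⟨1, by omega⟩, by rw [h]; intro hc; exact absurd (Fin.mk.injEq .. ▸ hc) (by simp)⟩
    · exact ⟨⟨0, by omega⟩, fun hc => h hc.symm⟩
  obtain ⟨j, hjk⟩ := hj
  have hxTj : x ∉ T j := fun h => Finset.disjoint_left.mp (hTd j k hjk) h hxk
  -- the edge e of M containing t j
  obtain ⟨e, heM, hte⟩ := Finset.mem_biUnion.mp (htV j)
  have hecard : e.card = 3 := hcard3 e (hMH heM)
  -- a second vertex of e
  have : (e.erase (t j)).Nonempty := by
    have h1 : (e.erase (t j)).card = e.card - 1 := Finset.card_erase_of_mem hte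
    rw [← Finset.card_pos, h1, hecard]; omega
  obtain ⟨a, ha⟩ := this
  have hae : a ∈ e := Finset.mem_of_mem_erase ha
  have hat : a ≠ t j := Finset.ne_of_mem_erase ha
  have haV : a ∈ V := hsubV e heM hae
  -- common disjointness facts for the swap
  have herase_sub : M.erase e ⊆ M := Finset.erase_subset e M
  have herase_card : (M.erase e).card = s - 1 := by
    rw [Finset.card_erase_of_mem heM, hMcard]
  have herase_pd : ((M.erase e : Finset (Finset ℕ)) : Set (Finset ℕ)).PairwiseDisjoint id :=
    hMd.subset (by exact_mod_cast Finset.coe_subset.mpr herase_sub)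
  -- T j is disjoint from every member of M.erase e
  have hTj_er : ∀ e' ∈ M.erase e, Disjoint (T j) e' := by
    intro e' he'
    have he'M : e' ∈ M := herase_sub he'
    have hne : e' ≠ e := Finset.ne_of_mem_erase he'
    rw [Finset.disjoint_left]
    intro z hz1 hz2
    have hzV : z ∈ V := hsubV e' he'M hz2
    have : z = t j := hTonce j z (Finset.mem_inter.mpr ⟨hz1, hzV⟩)
    exact Finset.disjoint_left.mp (hMpd e' he'M e heM hne) hz2 (this ▸ hte)
  -- final case analysis on a
  by_cases haR : a ∈ R
  · -- a = t j' for some j' ≠ j; swap e for T j and T j'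
    have : a ∈ Vt := hVte ▸ Finset.mem_inter.mpr ⟨haV, haR⟩
    obtain ⟨j', -, hj'⟩ := Finset.mem_image.mp this
    have hjj' : j' ≠ j := fun h => hat (by rw [← hj', h])
    have hTj'_er : ∀ e' ∈ M.erase e, Disjoint (T j') e' := by
      intro e' he'
      have he'M : e' ∈ M := herase_sub he'
      have hne : e' ≠ e := Finset.ne_of_mem_erase he'
      rw [Finset.disjoint_left]
      intro z hz1 hz2
      have hzV : z ∈ V := hsubV e' he'M hz2
      have : z = t j' := hTonce j' z (Finset.mem_inter.mpr ⟨hz1, hzV⟩)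
      rw [this, hj'] at hz2
      exact Finset.disjoint_left.mp (hMpd e' he'M e heM hne) hz2 hae
    obtain ⟨pd1, hc1⟩ := insert_matching (M.erase e) (T j') herase_pd hTj'_er (hTne j')
    have hTj_ins : ∀ e' ∈ insert (T j') (M.erase e), Disjoint (T j) e' := by
      intro e' he'
      rcases Finset.mem_insert.mp he' with h | h
      · exact h ▸ hTd j j' (fun hc => hjj' hc.symm)
      · exact hTj_er e' h
    obtain ⟨pd2, hc2⟩ := insert_matching (insert (T j') (M.erase e)) (T j) pd1 hTj_ins (hTne j)
    have := hcontra (insert (T j) (insert (T j') (M.erase e))) (by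
      intro G hG
      rcases Finset.mem_insert.mp hG with h | h
      · exact h ▸ hT j
      rcases Finset.mem_insert.mp h with h' | h'
      · exact h' ▸ hT j'
      · exact hMH (herase_sub h')) pd2
    omega
  · -- a = v i for some i; swap e for T j and F i
    have : a ∈ Vp := hVpe ▸ Finset.mem_sdiff.mpr ⟨haV, haR⟩
    obtain ⟨i, -, hi⟩ := Finset.mem_image.mp this
    have hFi_er : ∀ e' ∈ M.erase e, Disjoint (F i) e' := by
      intro e' he'
      have he'M : e' ∈ M := herase_sub he'
      have hne : e' ≠ e := Finset.ne_of_mem_erase he'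
      rw [Finset.disjoint_left]
      intro z hz1 hz2
      have hzV : z ∈ V := hsubV e' he'M hz2
      rw [hFi i] at hz1
      rcases Finset.mem_insert.mp hz1 with h | h
      · exact hxV (h ▸ hzV)
      · by_cases hc : z ∈ C
        · exact hCV z hc hzV
        · have : z = v i := hPonce i z (Finset.mem_inter.mpr ⟨Finset.mem_sdiff.mpr ⟨h, hc⟩, hzV⟩)
          rw [this, hi] at hz2
          exact Finset.disjoint_left.mp (hMpd e' he'M e heM hne) hz2 hae
    obtain ⟨pd1, hc1⟩ := insert_matching (M.erase e) (F i) herase_pd hFi_er ⟨x, hxF i⟩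
    have hTj_ins : ∀ e' ∈ insert (F i) (M.erase e), Disjoint (T j) e' := by
      intro e' he'
      rcases Finset.mem_insert.mp he' with h | h
      · subst h
        rw [Finset.disjoint_left]
        intro z hz1 hz2
        have : z ∈ F i ∩ R := Finset.mem_inter.mpr ⟨hz2, hTsub j hz1⟩
        rw [hFR i, Finset.mem_singleton] at this
        exact hxTj (this ▸ hz1)
      · exact hTj_er e' h
    obtain ⟨pd2, hc2⟩ := insert_matching (insert (F i) (M.erase e)) (T j) pd1 hTj_ins (hTne j)
    have := hcontra (insert (T j) (insert (F i) (M.erase e))) (by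
      intro G hG
      rcases Finset.mem_insert.mp hG with h | h
      · exact h ▸ hT j
      rcases Finset.mem_insert.mp h with h' | h'
      · exact h' ▸ hFH i
      · exact hMH (herase_sub h')) pd2
    omega
end

section
/- Let H ⊆ binom([n],3) be a 3-graph with matching number 2 containing four edges (1,2,5), (3,4,5), (6,7,8), (6,9,10). Then every edge T ∈ H with T ∩ {5,6} = ∅ satisfies: either T ∩ {1,2} ≠ ∅ and T ∩ {3,4} ≠ ∅, or T ∩ {7,8} ≠ ∅ and T ∩ {9,10} ≠ ∅. -/
lemma mn_ge (H M : Finset (Finset ℕ)) (hM : M ⊆ H)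
    (hpd : (M : Set (Finset ℕ)).PairwiseDisjoint id) : M.card ≤ matchingNumber H := by
  apply le_csSup
  · exact ⟨H.card, fun m ⟨N, hN, hc, _⟩ => hc ▸ Finset.card_le_card hN⟩
  · exact ⟨M, hM, rfl, hpd⟩

lemma three_match (H : Finset (Finset ℕ)) (hν : matchingNumber H = 2)
    (T e1 e2 : Finset ℕ) (hT : T ∈ H) (h1 : e1 ∈ H) (h2 : e2 ∈ H)
    (hT1 : T ≠ e1) (hT2 : T ≠ e2) (h12 : e1 ≠ e2)
    (d1 : Disjoint T e1) (d2 : Disjoint T e2) (d3 : Disjoint e1 e2) : False := by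
  have hc : ({T, e1, e2} : Finset (Finset ℕ)).card = 3 := by
    rw [Finset.card_insert_of_notMem (by simp [hT1, hT2]),
        Finset.card_insert_of_notMem (by simp [h12])]
    rfl
  have hle : ({T, e1, e2} : Finset (Finset ℕ)).card ≤ matchingNumber H := by
    apply mn_ge
    · intro x hx; simp at hx; rcases hx with rfl|rfl|rfl <;> assumption
    · intro x hx y hy hxy
      simp at hx hy
      rcases hx with rfl|rfl|rfl <;> rcases hy with rfl|rfl|rfl <;>
        simp_all [Function.onFun, disjoint_comm]
  omega

/-- If a 3-graph with matching number 2 contains the edges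
`{1,2,5}, {3,4,5}, {6,7,8}, {6,9,10}`, then every edge avoiding `{5,6}` meets
both `{1,2}` and `{3,4}`, or meets both `{7,8}` and `{9,10}`. -/
theorem stmt16 (n : ℕ) (H : Finset (Finset ℕ))
    (hH : H ⊆ (Finset.range n).powersetCard 3)
    (hν : matchingNumber H = 2)
    (h1 : ({1, 2, 5} : Finset ℕ) ∈ H) (h2 : ({3, 4, 5} : Finset ℕ) ∈ H)
    (h3 : ({6, 7, 8} : Finset ℕ) ∈ H) (h4 : ({6, 9, 10} : Finset ℕ) ∈ H) :
    ∀ T ∈ H, Disjoint T ({5, 6} : Finset ℕ) →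
      ((T ∩ {1, 2}).Nonempty ∧ (T ∩ {3, 4}).Nonempty) ∨
      ((T ∩ {7, 8}).Nonempty ∧ (T ∩ {9, 10}).Nonempty) := by
  intro T hT hdisj
  have h5 : 5 ∉ T := fun h => (Finset.disjoint_left.mp hdisj h) (by simp)
  have h6 : 6 ∉ T := fun h => (Finset.disjoint_left.mp hdisj h) (by simp)
  by_cases hA : (T ∩ {1, 2}).Nonempty
  · by_cases hB : (T ∩ {3, 4}).Nonempty
    · exact Or.inl ⟨hA, hB⟩
    · right
      have hne : 3 ∉ T ∧ 4 ∉ T := by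
        constructor <;> (intro h; exact hB ⟨_, Finset.mem_inter.mpr ⟨h, by simp⟩⟩)
      have dT : Disjoint T ({3,4,5} : Finset ℕ) := by
        simp [Finset.disjoint_right, hne.1, hne.2, h5]
      constructor
      · by_contra hc
        have : 7 ∉ T ∧ 8 ∉ T := by
          constructor <;> (intro h; exact hc ⟨_, Finset.mem_inter.mpr ⟨h, by simp⟩⟩)
        exact three_match H hν T {3,4,5} {6,7,8} hT h2 h3
          (by intro h; rw [h] at h5; simp at h5)
          (by intro h; rw [h] at h6; simp at h6)
          (by decide) dT
          (by simp [Finset.disjoint_right, this.1, this.2, h6])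
          (by decide)
      · by_contra hc
        have : 9 ∉ T ∧ 10 ∉ T := by
          constructor <;> (intro h; exact hc ⟨_, Finset.mem_inter.mpr ⟨h, by simp⟩⟩)
        exact three_match H hν T {3,4,5} {6,9,10} hT h2 h4
          (by intro h; rw [h] at h5; simp at h5)
          (by intro h; rw [h] at h6; simp at h6)
          (by decide) dT
          (by simp [Finset.disjoint_right, this.1, this.2, h6])
          (by decide)
  · right
    have hne : 1 ∉ T ∧ 2 ∉ T := by
      constructor <;> (intro h; exact hA ⟨_, Finset.mem_inter.mpr ⟨h, by simp⟩⟩)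
    have dT : Disjoint T ({1,2,5} : Finset ℕ) := by
      simp [Finset.disjoint_right, hne.1, hne.2, h5]
    constructor
    · by_contra hc
      have : 7 ∉ T ∧ 8 ∉ T := by
        constructor <;> (intro h; exact hc ⟨_, Finset.mem_inter.mpr ⟨h, by simp⟩⟩)
      exact three_match H hν T {1,2,5} {6,7,8} hT h1 h3
        (by intro h; rw [h] at h5; simp at h5)
        (by intro h; rw [h] at h6; simp at h6)
        (by decide) dT
        (by simp [Finset.disjoint_right, this.1, this.2, h6])
        (by decide)
    · by_contra hc
      have : 9 ∉ T ∧ 10 ∉ T := by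
        constructor <;> (intro h; exact hc ⟨_, Finset.mem_inter.mpr ⟨h, by simp⟩⟩)
      exact three_match H hν T {1,2,5} {6,9,10} hT h1 h4
        (by intro h; rw [h] at h5; simp at h5)
        (by intro h; rw [h] at h6; simp at h6)
        (by decide) dT
        (by simp [Finset.disjoint_right, this.1, this.2, h6])
        (by decide)
end

section
/- For every k ≥ 2 there exists a (k-1)-resilient intersecting k-uniform hypergraph with at least ⌊(e-1)·k!⌋ edges; that is, m(k,1) ≥ ⌊(e-1)·k!⌋. -/
/-- cumulative vertex counter: `elc k = 1 + 2 + ⋯ + k`. -/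
def elc : ℕ → ℕ
  | 0 => 0
  | k + 1 => elc k + (k + 1)

/-- fresh `(k+1)`-set of vertices used at level `k+1`. -/
def elA (k : ℕ) : Finset ℕ := Finset.Ico (elc k) (elc (k + 1))

/-- The Erdős–Lovász style family. -/
def EL : ℕ → Finset (Finset ℕ)
  | 0 => ∅
  | k + 1 => insert (elA k) (((elA k) ×ˢ EL k).image fun p => insert p.1 p.2)

/-- its cardinality -/
def elr : ℕ → ℕ
  | 0 => 0
  | k + 1 => (k + 1) * elr k + 1

lemma elc_succ (k : ℕ) : elc (k + 1) = elc k + (k + 1) := rfl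

lemma elA_card (k : ℕ) : (elA k).card = k + 1 := by
  simp [elA, elc_succ]

lemma elA_nonempty (k : ℕ) : (elA k).Nonempty := by
  rw [← Finset.card_pos, elA_card]; omega

lemma mem_elA_ge {k a : ℕ} (h : a ∈ elA k) : elc k ≤ a := (Finset.mem_Ico.1 h).1

lemma mem_elA_lt {k a : ℕ} (h : a ∈ elA k) : a < elc (k + 1) := (Finset.mem_Ico.1 h).2

lemma EL_subset : ∀ k, ∀ E ∈ EL k, E ⊆ Finset.range (elc k) := by
  intro k
  induction k with
  | zero => simp [EL]
  | succ k ih =>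
    intro E hE
    rw [EL] at hE
    rcases Finset.mem_insert.1 hE with rfl | h
    · intro x hx
      exact Finset.mem_range.2 (mem_elA_lt hx)
    · obtain ⟨⟨a, E'⟩, hp, rfl⟩ := Finset.mem_image.1 h
      obtain ⟨ha, hE'⟩ := Finset.mem_product.1 hp
      intro x hx
      rcases Finset.mem_insert.1 hx with rfl | hx
      · exact Finset.mem_range.2 (mem_elA_lt ha)
      · have := Finset.mem_range.1 (ih E' hE' hx)
        exact Finset.mem_range.2 (by have := elc_succ k; omega)

lemma EL_card : ∀ k, ∀ E ∈ EL k, E.card = k := by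
  intro k
  induction k with
  | zero => simp [EL]
  | succ k ih =>
    intro E hE
    rw [EL] at hE
    rcases Finset.mem_insert.1 hE with rfl | h
    · exact elA_card k
    · obtain ⟨⟨a, E'⟩, hp, rfl⟩ := Finset.mem_image.1 h
      obtain ⟨ha, hE'⟩ := Finset.mem_product.1 hp
      have haE' : a ∉ E' := by
        intro hx
        have := Finset.mem_range.1 (EL_subset k E' hE' hx)
        have := mem_elA_ge ha
        omega
      rw [Finset.card_insert_of_notMem haE', ih E' hE']

lemma EL_inter : ∀ k, ∀ E ∈ EL k, ∀ E' ∈ EL k, (E ∩ E').Nonempty := by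
  intro k
  induction k with
  | zero => simp [EL]
  | succ k ih =>
    intro E hE E' hE'
    rw [EL] at hE hE'
    rcases Finset.mem_insert.1 hE with rfl | h <;>
      rcases Finset.mem_insert.1 hE' with rfl | h'
    · simpa using elA_nonempty k
    · obtain ⟨⟨a, F⟩, hp, rfl⟩ := Finset.mem_image.1 h'
      obtain ⟨ha, hF⟩ := Finset.mem_product.1 hp
      exact ⟨a, Finset.mem_inter.2 ⟨ha, Finset.mem_insert_self a F⟩⟩
    · obtain ⟨⟨a, F⟩, hp, rfl⟩ := Finset.mem_image.1 h
      obtain ⟨ha, hF⟩ := Finset.mem_product.1 hp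
      exact ⟨a, Finset.mem_inter.2 ⟨Finset.mem_insert_self a F, ha⟩⟩
    · obtain ⟨⟨a, F⟩, hp, rfl⟩ := Finset.mem_image.1 h
      obtain ⟨ha, hF⟩ := Finset.mem_product.1 hp
      obtain ⟨⟨b, G⟩, hq, rfl⟩ := Finset.mem_image.1 h'
      obtain ⟨hb, hG⟩ := Finset.mem_product.1 hq
      obtain ⟨x, hx⟩ := ih F hF G hG
      obtain ⟨hx1, hx2⟩ := Finset.mem_inter.1 hx
      exact ⟨x, Finset.mem_inter.2
        ⟨Finset.mem_insert_of_mem hx1, Finset.mem_insert_of_mem hx2⟩⟩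

lemma EL_cover : ∀ k, ∀ Y : Finset ℕ, (∀ E ∈ EL k, (E ∩ Y).Nonempty) → k ≤ Y.card := by
  intro k
  induction k with
  | zero => intro Y _; exact Nat.zero_le _
  | succ k ih =>
    intro Y hY
    by_cases hsub : elA k ⊆ Y
    · calc k + 1 = (elA k).card := (elA_card k).symm
        _ ≤ Y.card := Finset.card_le_card hsub
    · obtain ⟨a, ha, haY⟩ := Finset.not_subset.1 hsub
      set Y' := Y.filter (fun x => x < elc k) with hY'def
      have hcov : ∀ E ∈ EL k, (E ∩ Y').Nonempty := by
        intro E hE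
        have hmem : insert a E ∈ EL (k + 1) := by
          rw [EL]
          refine Finset.mem_insert_of_mem (Finset.mem_image.2 ⟨⟨a, E⟩, ?_, rfl⟩)
          exact Finset.mem_product.2 ⟨ha, hE⟩
        obtain ⟨x, hx⟩ := hY _ hmem
        obtain ⟨hx1, hx2⟩ := Finset.mem_inter.1 hx
        rcases Finset.mem_insert.1 hx1 with rfl | hxE
        · exact absurd hx2 haY
        · have hxlt : x < elc k := Finset.mem_range.1 (EL_subset k E hE hxE)
          exact ⟨x, Finset.mem_inter.2 ⟨hxE, Finset.mem_filter.2 ⟨hx2, hxlt⟩⟩⟩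
      have h1 : k ≤ Y'.card := ih Y' hcov
      obtain ⟨b, hb⟩ := hY (elA k) (by rw [EL]; exact Finset.mem_insert_self _ _)
      obtain ⟨hb1, hb2⟩ := Finset.mem_inter.1 hb
      have hbY' : b ∉ Y' := by
        intro h
        have := (Finset.mem_filter.1 h).2
        have := mem_elA_ge hb1
        omega
      have : Y' ⊂ Y := ⟨Finset.filter_subset _ _, fun h => hbY' (h hb2)⟩
      have := Finset.card_lt_card this
      omega

lemma EL_card_eq : ∀ k, (EL k).card = elr k := by
  intro k
  induction k with
  | zero => simp [EL, elr]
  | succ k ih =>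
    rw [EL, elr]
    have hnot : elA k ∉ ((elA k) ×ˢ EL k).image fun p => insert p.1 p.2 := by
      intro h
      obtain ⟨⟨a, E⟩, hp, heq⟩ := Finset.mem_image.1 h
      obtain ⟨ha, hE⟩ := Finset.mem_product.1 hp
      rcases Nat.eq_zero_or_pos k with rfl | hk
      · simp [EL] at hE
      · have hEcard : E.card = k := EL_card k E hE
        have : E.Nonempty := by rw [← Finset.card_pos, hEcard]; omega
        obtain ⟨x, hx⟩ := this
        have hxlt : x < elc k := Finset.mem_range.1 (EL_subset k E hE hx)
        have hxA : x ∈ elA k := by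
          rw [← heq]; exact Finset.mem_insert_of_mem hx
        have := mem_elA_ge hxA
        omega
    rw [Finset.card_insert_of_notMem hnot]
    have hinj : Set.InjOn (fun p : ℕ × Finset ℕ => insert p.1 p.2)
        (((elA k) ×ˢ EL k : Finset (ℕ × Finset ℕ)) : Set (ℕ × Finset ℕ)) := by
      rintro ⟨a, E⟩ hp ⟨b, F⟩ hq heq
      obtain ⟨ha, hE⟩ := Finset.mem_product.1 (Finset.mem_coe.1 hp)
      obtain ⟨hb, hF⟩ := Finset.mem_product.1 (Finset.mem_coe.1 hq)
      simp only at heq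
      have haF : a = b := by
        have : a ∈ insert b F := by rw [← heq]; exact Finset.mem_insert_self a E
        rcases Finset.mem_insert.1 this with h | h
        · exact h
        · have := Finset.mem_range.1 (EL_subset k F hF h)
          have := mem_elA_ge ha
          omega
      subst haF
      have haE : a ∉ E := by
        intro hx
        have := Finset.mem_range.1 (EL_subset k E hE hx)
        have := mem_elA_ge ha
        omega
      have haF' : a ∉ F := by
        intro hx
        have := Finset.mem_range.1 (EL_subset k F hF hx)
        have := mem_elA_ge ha
        omega
      have : E = F := by
        have h1 : (insert a E).erase a = (insert a F).erase a := by rw [heq]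
        rwa [Finset.erase_insert haE, Finset.erase_insert haF'] at h1
      rw [this]
    rw [Finset.card_image_of_injOn hinj, Finset.card_product, elA_card, ih]

lemma matchingNumber_eq_one (H : Finset (Finset ℕ)) (hne : H.Nonempty)
    (hint : ∀ A ∈ H, ∀ B ∈ H, (A ∩ B).Nonempty) : matchingNumber H = 1 := by
  unfold matchingNumber
  apply le_antisymm
  · refine csSup_le ⟨0, ∅, by simp⟩ ?_
    rintro m ⟨M, hMH, rfl, hdisj⟩
    apply Finset.card_le_one.2
    intro X hX Y hY
    by_contra hne'
    have hd : Disjoint X Y := hdisj (Finset.mem_coe.2 hX) (Finset.mem_coe.2 hY) hne'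
    have := hint X (hMH hX) Y (hMH hY)
    rw [← Finset.not_disjoint_iff_nonempty_inter] at this
    exact this hd
  · obtain ⟨E, hE⟩ := hne
    apply le_csSup
    · refine ⟨H.card, ?_⟩
      rintro m ⟨M, hMH, rfl, -⟩
      exact Finset.card_le_card hMH
    · exact ⟨{E}, Finset.singleton_subset_iff.2 hE, Finset.card_singleton E, by simp⟩

lemma EL_nonempty {k : ℕ} (hk : 1 ≤ k) : (EL k).Nonempty := by
  obtain ⟨m, rfl⟩ : ∃ m, k = m + 1 := ⟨k - 1, by omega⟩
  rw [EL]
  exact Finset.insert_nonempty _ _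

/-- sum identity: `(∑_{i≤k} 1/i!) · k! = k! + elr k`. -/
lemma elr_sum : ∀ k : ℕ, (∑ i ∈ Finset.range (k + 1), (1 : ℝ) / (Nat.factorial i)) *
    (Nat.factorial k) = (Nat.factorial k) + elr k := by
  intro k
  induction k with
  | zero => simp [elr]
  | succ k ih =>
    have hfk1 : ((Nat.factorial (k + 1) : ℝ)) ≠ 0 := by
      exact_mod_cast Nat.factorial_ne_zero (k + 1)
    have hf : (Nat.factorial (k + 1) : ℝ) = ((k : ℝ) + 1) * Nat.factorial k := by
      rw [Nat.factorial_succ]; push_cast; ring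
    rw [Finset.sum_range_succ, elr]
    push_cast
    rw [add_mul]
    have h2 : (1 / ((Nat.factorial (k + 1) : ℝ))) * (Nat.factorial (k + 1) : ℝ) = 1 := by
      field_simp
    rw [h2, hf]
    linear_combination ((k : ℝ) + 1) * ih

lemma floor_le_elr (k : ℕ) (hk : 1 ≤ k) :
    ⌊(Real.exp 1 - 1) * (Nat.factorial k : ℝ)⌋₊ ≤ elr k := by
  have hb := Real.exp_bound' (x := 1) zero_le_one le_rfl (n := k + 1) (Nat.succ_pos k)
  simp only [one_pow, one_mul] at hb
  push_cast at hb
  -- hb : exp 1 ≤ ∑ + (k+1+1)/((k+1)! * (k+1))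
  have hfk : (0 : ℝ) < Nat.factorial k := by exact_mod_cast Nat.factorial_pos k
  have hf1 : (Nat.factorial (k + 1) : ℝ) = ((k : ℝ) + 1) * Nat.factorial k := by
    rw [Nat.factorial_succ]; push_cast; ring
  set t : ℝ := ((k : ℝ) + 1 + 1) / ((Nat.factorial (k + 1) : ℝ) * ((k : ℝ) + 1)) with ht
  have htail : t * (Nat.factorial k : ℝ) < 1 := by
    rw [ht, hf1, div_mul_eq_mul_div, div_lt_one (by positivity)]
    have hk1 : (1 : ℝ) ≤ (k : ℝ) := by exact_mod_cast hk
    nlinarith [hfk]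
  have hb2 : Real.exp 1 ≤ (∑ i ∈ Finset.range (k + 1), (1 : ℝ) / (Nat.factorial i)) + t := by
    rw [ht]
    convert hb using 3
  have hmul : Real.exp 1 * (Nat.factorial k : ℝ) ≤
      (∑ i ∈ Finset.range (k + 1), (1 : ℝ) / (Nat.factorial i)) * (Nat.factorial k : ℝ)
      + t * (Nat.factorial k : ℝ) := by
    have := mul_le_mul_of_nonneg_right hb2 hfk.le
    linarith [this]
  rw [elr_sum k] at hmul
  have hlt : (Real.exp 1 - 1) * (Nat.factorial k : ℝ) < (elr k : ℝ) + 1 := by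
    nlinarith [htail, hmul]
  have h0 : (0 : ℝ) ≤ (Real.exp 1 - 1) * (Nat.factorial k : ℝ) := by
    have h1 : (1 : ℝ) + 1 ≤ Real.exp 1 := by
      have := Real.add_one_le_exp (1 : ℝ)
      linarith
    nlinarith
  have := (Nat.floor_lt h0).2 (by exact_mod_cast hlt)
  omega

/-- For every `k ≥ 2` there is a `(k-1)`-resilient intersecting
`k`-graph with at least `⌊(e-1)·k!⌋` edges, i.e. `m(k,1) ≥ ⌊(e-1)·k!⌋`. -/
theorem stmt19 (k : ℕ) (hk : 2 ≤ k) :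
    ∃ (n : ℕ) (H : Finset (Finset ℕ)),
      H ⊆ (Finset.range n).powersetCard k ∧
      (∀ A ∈ H, ∀ B ∈ H, (A ∩ B).Nonempty) ∧
      Resilient (k - 1) H ∧ matchingNumber H = 1 ∧
      ⌊(Real.exp 1 - 1) * (Nat.factorial k : ℝ)⌋₊ ≤ H.card := by
  have hk1 : 1 ≤ k := by omega
  refine ⟨elc k, EL k, ?_, EL_inter k, ?_, ?_, ?_⟩
  · intro E hE
    exact Finset.mem_powersetCard.2 ⟨EL_subset k E hE, EL_card k E hE⟩
  · intro T hT
    have hTk : T.card < k := by omega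
    have hmn : matchingNumber (EL k) = 1 :=
      matchingNumber_eq_one _ (EL_nonempty hk1) (EL_inter k)
    rw [hmn]
    have hex : ∃ E ∈ EL k, Disjoint E T := by
      by_contra h
      push_neg at h
      have hcov : ∀ E ∈ EL k, (E ∩ T).Nonempty := by
        intro E hE
        rw [← Finset.not_disjoint_iff_nonempty_inter]
        exact h E hE
      have := EL_cover k T hcov
      omega
    obtain ⟨E, hE, hdis⟩ := hex
    apply matchingNumber_eq_one
    · exact ⟨E, Finset.mem_filter.2 ⟨hE, hdis⟩⟩
    · intro A hA B hB
      exact EL_inter k A (Finset.filter_subset _ _ hA) B (Finset.filter_subset _ _ hB)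
  · exact matchingNumber_eq_one _ (EL_nonempty hk1) (EL_inter k)
  · rw [EL_card_eq k]
    exact floor_le_elr k hk1
end
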